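/- arXiv:1903.08379 — 4 statements merged into one kernel-verified Lean document; each statement's English description precedes it below -/
import Mathlib

section
/- For all n ≥ 1 and m ≥ 0, the number of (m+1)-th order partitions of an n-element set satisfies |℘_n^(m+1)| = Σ_{k=1}^n |℘_k^(m)| · S(n,k), where S(n,k) is the ordinary Stirling number of the second kind and |℘_k^(0)| = 1. -/
/-! An `(m+1)`-th order partition of `s` is a partition `P` of `s` together with an `m`-th order
partition of the set `P.parts` of its blocks. Transporting along an embedding shows that the number
of `m`-th order partitions of a finite set depends only on its cardinality, so the partitions `P`
with `k` blocks each contribute `|℘ₖ^(m)|`, and there are `S(n,k)` of them. -/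

/-- `m`-th order ("hyper") partitions of a finite set `s`:
a chain `(P₁, …, P_m)` where `P₁` is a partition of `s` and each `P_{j+1}`
is a partition of the set of blocks of `P_j`. For `m = 0` it is `s` itself
(a single trivial object). -/
def HyperPartition : (m : ℕ) → {α : Type} → [DecidableEq α] → Finset α → Type
  | 0, _, _, _ => PUnit
  | m + 1, _, _, s => (P : Finpartition s) × HyperPartition m P.parts

/-- The number of blocks of the outermost partition of a hyper partition
(for `m = 0`, by convention, the cardinality of the underlying set). -/
def HyperPartition.outerBlocks :
    (m : ℕ) → {α : Type} → [DecidableEq α] → {s : Finset α} →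
      HyperPartition m s → ℕ
  | 0, _, _, s, _ => s.card
  | 1, _, _, _, p => p.1.parts.card
  | m + 2, _, _, _, p => HyperPartition.outerBlocks (m + 1) p.2

/-- `|℘ₙ^(m)|`: the number of `m`-th order partitions of an `n`-element set. -/
noncomputable def hyperBell (m n : ℕ) : ℕ :=
  Nat.card (HyperPartition m (Finset.univ : Finset (Fin n)))

/-- The `m`-th order Stirling number `S^(m)(n,k)`: the number of `m`-th order
partitions of an `n`-element set whose outermost partition has exactly `k` blocks. -/
noncomputable def hyperStirling (m n k : ℕ) : ℕ :=
  Nat.card {p : HyperPartition m (Finset.univ : Finset (Fin n)) //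
    HyperPartition.outerBlocks m p = k}

/-- The ordinary Stirling number of the second kind `S(n,k)`: the number of
set partitions of an `n`-element set into exactly `k` blocks. -/
noncomputable def stirling (n k : ℕ) : ℕ :=
  Nat.card {P : Finpartition (Finset.univ : Finset (Fin n)) // P.parts.card = k}

/-- Composition `f(g(x))` of formal power series (intended for `g` with zero
constant term, in which case `coeff n (g ^ i) = 0` for `i > n`). -/
noncomputable def psComp (f g : PowerSeries ℚ) : PowerSeries ℚ :=
  PowerSeries.mk fun n =>
    PowerSeries.coeff n
      (∑ i ∈ Finset.range (n + 1), PowerSeries.C (PowerSeries.coeff i f) * g ^ i)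

/-- The iterated exponential series: `E₀ = exp x`, `E_{m+1} = exp (E_m - 1)`. -/
noncomputable def E : ℕ → PowerSeries ℚ
  | 0 => PowerSeries.exp ℚ
  | m + 1 => psComp (PowerSeries.exp ℚ) (E m - 1)

/-- The `m`-th order Bell number `Bₙ^(m) = n! · [xⁿ] E_m(x)`. -/
noncomputable def bell (m n : ℕ) : ℚ :=
  (n.factorial : ℚ) * PowerSeries.coeff n (E m)

namespace Finpartition

variable {α β : Type*} [DecidableEq α] [DecidableEq β] (f : α ↪ β) {s : Finset α}

def mapEmbedding (P : Finpartition s) : Finpartition (s.map f) :=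
  ofExistsUnique (P.parts.map (Finset.mapEmbedding f).toEmbedding)
    (by
      simp only [Finset.mem_map, RelEmbedding.coe_toEmbedding, Finset.mapEmbedding_apply]
      rintro _ ⟨b, hb, rfl⟩
      exact Finset.map_subset_map.2 (P.le hb))
    (by
      simp only [Finset.mem_map, RelEmbedding.coe_toEmbedding, Finset.mapEmbedding_apply]
      rintro _ ⟨x, hx, rfl⟩
      obtain ⟨b, ⟨hb, hxb⟩, hunique⟩ := P.existsUnique_mem hx
      refine ⟨b.map f, ⟨⟨b, hb, rfl⟩, Finset.mem_map_of_mem f hxb⟩, ?_⟩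
      rintro _ ⟨⟨c, hc, rfl⟩, hxc⟩
      rw [hunique c ⟨hc, (Finset.mem_map' f).1 hxc⟩])
    (by
      simp only [Finset.mem_map, RelEmbedding.coe_toEmbedding, Finset.mapEmbedding_apply,
        Finset.map_eq_empty, not_exists, not_and]
      rintro b hb rfl
      exact P.empty_notMem_parts hb)

noncomputable def comapEmbedding (Q : Finpartition (s.map f)) : Finpartition s :=
  ofExistsUnique (Q.parts.image fun b => b.preimage f f.injective.injOn)
    (by
      simp only [Finset.mem_image]
      rintro _ ⟨b, hb, rfl⟩
      exact Finset.preimage_subset (Q.le hb))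
    (by
      simp only [Finset.mem_image]
      intro x hx
      obtain ⟨b, ⟨hb, hxb⟩, hunique⟩ := Q.existsUnique_mem (Finset.mem_map_of_mem f hx)
      refine ⟨_, ⟨⟨b, hb, rfl⟩, Finset.mem_preimage.2 hxb⟩, ?_⟩
      rintro _ ⟨⟨c, hc, rfl⟩, hxc⟩
      rw [hunique c ⟨hc, Finset.mem_preimage.1 hxc⟩])
    (by
      simp only [Finset.mem_image, not_exists, not_and]
      intro b hb hempty
      obtain ⟨u, -, rfl⟩ := Finset.subset_map_iff.1 (Q.le hb)
      rw [Finset.preimage_map] at hempty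
      subst hempty
      exact Q.empty_notMem_parts (by simp at hb))

noncomputable def mapEmbeddingEquiv : Finpartition s ≃ Finpartition (s.map f) where
  toFun := mapEmbedding f
  invFun := comapEmbedding f
  left_inv P := by
    ext b
    simp [mapEmbedding, comapEmbedding]
  right_inv Q := by
    have hmap : ∀ b ∈ Q.parts, (b.preimage f f.injective.injOn).map f = b := by
      intro b hb
      obtain ⟨u, -, rfl⟩ := Finset.subset_map_iff.1 (Q.le hb)
      rw [Finset.preimage_map]
    refine Finpartition.ext ?_
    simp only [mapEmbedding, comapEmbedding, ofExistsUnique_parts, Finset.map_eq_image,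
      Finset.image_image]
    exact (Finset.image_congr hmap).trans Finset.image_id

end Finpartition

namespace HyperPartition

instance finite : ∀ (m : ℕ) {α : Type} [DecidableEq α] (s : Finset α),
    Finite (HyperPartition m s)
  | 0, _, _, _ => inferInstanceAs (Finite PUnit)
  | m + 1, _, _, s =>
    have := fun P : Finpartition s => finite m P.parts
    inferInstanceAs (Finite ((P : Finpartition s) × HyperPartition m P.parts))

noncomputable def mapEmbeddingEquiv : (m : ℕ) → {α β : Type} → [DecidableEq α] →
    [DecidableEq β] → (f : α ↪ β) → (s : Finset α) →
    HyperPartition m s ≃ HyperPartition m (s.map f)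
  | 0, _, _, _, _, _, _ => Equiv.refl PUnit
  | m + 1, _, _, _, _, f, _ =>
    (Finpartition.mapEmbeddingEquiv f).sigmaCongr fun P =>
      mapEmbeddingEquiv m (Finset.mapEmbedding f).toEmbedding P.parts

theorem card_eq_hyperBell (m : ℕ) {α : Type} [DecidableEq α] (s : Finset α) :
    Nat.card (HyperPartition m s) = hyperBell m s.card := by
  let g : Fin s.card ↪ α := s.equivFin.symm.toEmbedding.trans (.subtype (· ∈ s))
  have hg : Finset.univ.map g = s := by
    rw [← Finset.map_map, Finset.map_univ_equiv, ← Finset.attach_eq_univ, Finset.attach_map_val]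
  rw [hyperBell, Nat.card_congr (mapEmbeddingEquiv m g Finset.univ), hg]

theorem card_succ (m : ℕ) {α : Type} [DecidableEq α] (s : Finset α) :
    Nat.card (HyperPartition (m + 1) s) = ∑ P : Finpartition s, hyperBell m P.parts.card := by
  rw [← Finset.sum_congr rfl fun P _ => card_eq_hyperBell m P.parts]
  exact Nat.card_sigma (β := fun P : Finpartition s => HyperPartition m P.parts)

end HyperPartition

/-- `|℘ₙ^(m+1)| = Σ_{k=1}^n |℘ₖ^(m)| · S(n,k)` (and `|℘ₖ^(0)| = 1` holds
by definition of `HyperPartition`). -/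
theorem stmt0 (n : ℕ) (hn : 1 ≤ n) (m : ℕ) :
    hyperBell (m + 1) n = ∑ k ∈ Finset.Icc 1 n, hyperBell m k * stirling n k := by
  have hcard : ∀ P ∈ (Finset.univ : Finset (Finpartition (Finset.univ : Finset (Fin n)))),
      P.parts.card ∈ Finset.Icc 1 n := fun P _ => by
    have : Nonempty (Fin n) := ⟨⟨0, hn⟩⟩
    exact Finset.mem_Icc.2 ⟨Finset.card_pos.2 (P.parts_nonempty Finset.univ_nonempty.ne_empty),
      by simpa using P.card_parts_le_card⟩
  rw [hyperBell, HyperPartition.card_succ, ← Finset.sum_fiberwise_of_maps_to hcard]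
  refine Finset.sum_congr rfl fun k _ => ?_
  rw [stirling, Nat.card_eq_fintype_card, Fintype.card_subtype, mul_comm,
    Finset.sum_const_nat fun P hP => by rw [(Finset.mem_filter.1 hP).2]]
end

section
/- For all n ≥ 1 and m ≥ 1, the number of m-th order partitions of an n-element set equals the m-th order Bell number: |℘_n^(m)| = B_n^(m). -/
open Finset
open scoped Nat

theorem Finset.sum_powerset_sdiff {β M : Type*} [AddCommMonoid M] [DecidableEq β]
    (f : Finset β → M) (s : Finset β) :
    ∑ t ∈ s.powerset, f (s \ t) = ∑ t ∈ s.powerset, f t :=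
  sum_nbij' (s \ ·) (s \ ·) (by simp) (by simp)
    (fun t ht => Finset.sdiff_sdiff_eq_self (mem_powerset.1 ht))
    (fun t ht => Finset.sdiff_sdiff_eq_self (mem_powerset.1 ht)) (fun _ _ => rfl)

theorem Finset.sum_powerset_erase_apply_card {β M : Type*} [AddCancelCommMonoid M]
    [DecidableEq β] (f : ℕ → M) (s : Finset β) :
    ∑ t ∈ s.powerset.erase s, f #t = ∑ j ∈ range #s, (#s).choose j • f j := by
  have h := sum_powerset_apply_card f (x := s)
  rw [← add_sum_erase _ _ (mem_powerset_self s), sum_range_succ, Nat.choose_self, one_smul,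
    add_comm] at h
  exact add_right_cancel h

namespace Finpartition

variable {α : Type*} [DecidableEq α] {s B : Finset α}

theorem sup_parts_erase (P : Finpartition s) (hB : B ∈ P.parts) :
    (P.parts.erase B).sup id = s \ B := by
  ext x
  simp only [mem_sup, mem_erase, id, mem_sdiff]
  constructor
  · rintro ⟨p, ⟨hpB, hp⟩, hxp⟩
    exact ⟨P.le hp hxp, fun hxB => hpB (P.eq_of_mem_parts hp hB hxp hxB)⟩
  · rintro ⟨hxs, hxB⟩
    obtain ⟨p, hp, hxp⟩ := P.exists_mem hxs
    exact ⟨p, ⟨fun h => hxB (h ▸ hxp), hp⟩, hxp⟩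

theorem notMem_parts_of_sdiff (hB : B.Nonempty) (Q : Finpartition (s \ B)) : B ∉ Q.parts := by
  intro h
  obtain ⟨x, hx⟩ := hB
  exact (mem_sdiff.1 (Q.le h hx)).2 hx

def erasePartEquiv (hBs : B ⊆ s) (hB : B.Nonempty) (k : ℕ) :
    {P : Finpartition s // #P.parts = k + 1 ∧ B ∈ P.parts} ≃
      {Q : Finpartition (s \ B) // #Q.parts = k} where
  toFun P := ⟨P.1.ofSubset (erase_subset B _) (P.1.sup_parts_erase P.2.2), by
    simp [card_erase_of_mem P.2.2, P.2.1]⟩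
  invFun Q := ⟨Q.1.extend hB.ne_empty sdiff_disjoint (sdiff_union_of_subset hBs), by
    simp [card_insert_of_notMem (notMem_parts_of_sdiff hB Q.1), Q.2]⟩
  left_inv P := Subtype.ext (Finpartition.ext (insert_erase P.2.2))
  right_inv Q := Subtype.ext (Finpartition.ext (erase_insert (notMem_parts_of_sdiff hB Q.1)))

theorem card_filter_card_parts_eq_zero (s : Finset α) :
    #{P : Finpartition s | #P.parts = 0} = if s = ∅ then 1 else 0 := by
  simp only [card_eq_zero, parts_eq_empty_iff, bot_eq_empty]
  split_ifs with h
  · subst h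
    rw [filter_true_of_mem fun _ _ => rfl, card_univ, ← bot_eq_empty]
    exact Fintype.card_unique
  · simp [h]

theorem succ_mul_card_filter_card_parts (s : Finset α) (k : ℕ) :
    (k + 1) * #{P : Finpartition s | #P.parts = k + 1} =
      ∑ t ∈ s.powerset.erase s, #{Q : Finpartition t | #Q.parts = k} := by
  have hcount : (k + 1) * #{P : Finpartition s | #P.parts = k + 1} =
      ∑ B ∈ s.powerset, #{P : Finpartition s | #P.parts = k + 1 ∧ B ∈ P.parts} := by
    have hparts : ∀ P : Finpartition s, {B ∈ s.powerset | B ∈ P.parts} = P.parts := fun P =>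
      filter_mem_eq_inter.trans (inter_eq_right.2 fun B hB => mem_powerset.2 (P.le hB))
    have h := sum_card_bipartiteAbove_eq_sum_card_bipartiteBelow
      (s := {P : Finpartition s | #P.parts = k + 1}) (t := s.powerset) (fun P B => B ∈ P.parts)
    simp only [bipartiteAbove, bipartiteBelow, hparts, filter_filter] at h
    rw [← h, sum_congr rfl fun P hP => (mem_filter.1 hP).2, sum_const, smul_eq_mul, mul_comm]
  have hsplit : ∀ t ∈ s.powerset.erase s,
      #{P : Finpartition s | #P.parts = k + 1 ∧ s \ t ∈ P.parts} =
        #{Q : Finpartition t | #Q.parts = k} := by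
    intro t ht
    obtain ⟨hts, hsub⟩ := mem_erase.1 ht
    have hne : (s \ t).Nonempty :=
      sdiff_nonempty.2 fun h => hts ((mem_powerset.1 hsub).antisymm h)
    rw [← Fintype.card_subtype, ← Fintype.card_subtype,
      Fintype.card_congr (erasePartEquiv sdiff_subset hne k),
      Finset.sdiff_sdiff_eq_self (mem_powerset.1 hsub)]
  have hempty : #{P : Finpartition s | #P.parts = k + 1 ∧ ∅ ∈ P.parts} = 0 := by
    simp [empty_notMem_parts]
  rw [hcount, ← sum_powerset_sdiff, ← add_sum_erase _ _ (mem_powerset_self s), Finset.sdiff_self,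
    hempty, zero_add]
  exact sum_congr rfl hsplit

end Finpartition

theorem stirling_eq_card_filter (n k : ℕ) :
    stirling n k = #{P : Finpartition (univ : Finset (Fin n)) | #P.parts = k} := by
  rw [stirling, Nat.card_eq_fintype_card, Fintype.card_subtype]

theorem stirling_zero_right (n : ℕ) : stirling n 0 = if n = 0 then 1 else 0 := by
  simp only [stirling_eq_card_filter, Finpartition.card_filter_card_parts_eq_zero,
    ← Finset.card_eq_zero, card_univ, Fintype.card_fin]

theorem Finpartition.card_filter_card_parts_eq_stirling (k : ℕ) :
    ∀ {α : Type} [DecidableEq α] (s : Finset α),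
      #{P : Finpartition s | #P.parts = k} = stirling #s k := by
  induction k with
  | zero =>
    intro α _ s
    rw [card_filter_card_parts_eq_zero, stirling_zero_right]
    simp only [Finset.card_eq_zero]
  | succ k ih =>
    have hrec : ∀ {β : Type} [DecidableEq β] (t : Finset β),
        (k + 1) * #{P : Finpartition t | #P.parts = k + 1} =
          ∑ j ∈ range #t, (#t).choose j * stirling j k := by
      intro β _ t
      rw [succ_mul_card_filter_card_parts, sum_congr rfl fun u _ => ih u,
        sum_powerset_erase_apply_card (fun j => stirling j k)]
      rfl
    intro α _ s
    -- `s` and `univ : Finset (Fin #s)` satisfy the same recurrence; cancel the factor `k + 1`.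
    apply Nat.eq_of_mul_eq_mul_left k.succ_pos
    rw [hrec, stirling_eq_card_filter, hrec, card_univ, Fintype.card_fin]

theorem succ_mul_stirling_succ (n k : ℕ) :
    (k + 1) * stirling n (k + 1) = ∑ j ∈ range n, n.choose j * stirling j k := by
  rw [stirling_eq_card_filter, Finpartition.succ_mul_card_filter_card_parts,
    sum_congr rfl fun t _ => Finpartition.card_filter_card_parts_eq_stirling k t,
    sum_powerset_erase_apply_card (fun j => stirling j k), card_univ, Fintype.card_fin]
  rfl

instance HyperPartition.instFintype : ∀ (m : ℕ) {α : Type} [DecidableEq α] (s : Finset α),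
    Fintype (HyperPartition m s)
  | 0, _, _, _ => inferInstanceAs (Fintype PUnit)
  | m + 1, _, _, s =>
    letI := fun P : Finpartition s => HyperPartition.instFintype m P.parts
    inferInstanceAs (Fintype ((P : Finpartition s) × HyperPartition m P.parts))

theorem card_hyperPartition_succ {m : ℕ} {g : ℕ → ℕ}
    (hg : ∀ {β : Type} [DecidableEq β] (t : Finset β), Nat.card (HyperPartition m t) = g #t)
    {α : Type} [DecidableEq α] (s : Finset α) :
    Nat.card (HyperPartition (m + 1) s) = ∑ k ∈ range (#s + 1), stirling #s k * g k := by
  have hmaps : ∀ P ∈ (univ : Finset (Finpartition s)), #P.parts ∈ range (#s + 1) :=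
    fun P _ => mem_range.2 (Nat.lt_succ_of_le P.card_parts_le_card)
  calc Nat.card (HyperPartition (m + 1) s)
      = ∑ P : Finpartition s, g #P.parts := by
        rw [HyperPartition, Nat.card_sigma]
        exact sum_congr rfl fun P _ => hg P.parts
    _ = ∑ k ∈ range (#s + 1), stirling #s k * g k := by
        rw [← sum_fiberwise_of_maps_to hmaps]
        refine sum_congr rfl fun k _ => ?_
        rw [sum_congr rfl fun P hP => congrArg g (mem_filter.1 hP).2, sum_const, smul_eq_mul,
          Finpartition.card_filter_card_parts_eq_stirling]

theorem card_hyperPartition (m : ℕ) :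
    ∀ {α : Type} [DecidableEq α] (s : Finset α),
      Nat.card (HyperPartition m s) = hyperBell m #s := by
  induction m with
  | zero => intro α _ s; rfl
  | succ m ih =>
    intro α _ s
    rw [card_hyperPartition_succ ih, hyperBell, card_hyperPartition_succ ih, card_univ,
      Fintype.card_fin]

theorem hyperBell_zero (n : ℕ) : hyperBell 0 n = 1 := (Nat.card_unique : Nat.card PUnit = 1)

theorem hyperBell_succ (m n : ℕ) :
    hyperBell (m + 1) n = ∑ k ∈ range (n + 1), stirling n k * hyperBell m k := by
  rw [hyperBell, card_hyperPartition_succ (card_hyperPartition m), card_univ, Fintype.card_fin]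

section PowerSeries

open PowerSeries

theorem coeff_pow_eq_zero_of_lt {R : Type*} [CommSemiring R] {g : PowerSeries R}
    (hg : constantCoeff g = 0) {n d : ℕ} (h : n < d) : coeff n (g ^ d) = 0 :=
  coeff_of_lt_order _ ((Nat.cast_lt.2 h).trans_le (le_order_pow_of_constantCoeff_eq_zero d hg))

theorem coeff_psComp (f g : PowerSeries ℚ) (n : ℕ) :
    coeff n (psComp f g) = ∑ i ∈ range (n + 1), coeff i f * coeff n (g ^ i) := by
  simp [psComp]

theorem psComp_eq_subst (f : PowerSeries ℚ) {g : PowerSeries ℚ} (hg : constantCoeff g = 0) :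
    psComp f g = f.subst g := by
  ext n
  rw [coeff_psComp, coeff_subst' (HasSubst.of_constantCoeff_zero' hg),
    finsum_eq_sum_of_support_subset (s := range (n + 1))]
  · rfl
  · intro d hd
    by_contra h
    simp only [coe_range, Set.mem_Iio, not_lt] at h
    exact hd (by simp [coeff_pow_eq_zero_of_lt hg h])

theorem E_succ (m : ℕ) : E (m + 1) = psComp (exp ℚ) (E m - 1) := rfl

theorem constantCoeff_E_sub_one (m : ℕ) : constantCoeff (E m - 1) = 0 := by
  cases m with
  | zero => simp [E]
  | succ m => simp [E_succ, psComp, ← coeff_zero_eq_constantCoeff]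

theorem E_succ_eq_subst (m : ℕ) : E (m + 1) = (E m).subst (exp ℚ - 1) := by
  have hexp : HasSubst (exp ℚ - 1) := HasSubst.of_constantCoeff_zero' (by simp)
  induction m with
  | zero => exact psComp_eq_subst _ (constantCoeff_E_sub_one 0)
  | succ m ih =>
    have hE : HasSubst (E m - 1) := HasSubst.of_constantCoeff_zero' (constantCoeff_E_sub_one m)
    have hsub1 : (E m).subst (exp ℚ - 1) - 1 = (E m - 1).subst (exp ℚ - 1) := by
      rw [subst_sub hexp, ← coe_substAlgHom hexp, map_one]
    calc E (m + 2) = (exp ℚ).subst (E (m + 1) - 1) :=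
          psComp_eq_subst _ (constantCoeff_E_sub_one _)
      _ = subst (exp ℚ - 1) ((exp ℚ).subst (E m - 1)) := by
          rw [ih, hsub1, subst_comp_subst_apply hE hexp]
      _ = (E (m + 1)).subst (exp ℚ - 1) := by
          rw [E_succ, psComp_eq_subst _ (constantCoeff_E_sub_one _)]

theorem E_succ_eq_psComp (m : ℕ) : E (m + 1) = psComp (E m) (exp ℚ - 1) := by
  rw [E_succ_eq_subst, psComp_eq_subst _ (by simp)]

theorem coeff_exp_sub_one {j : ℕ} (hj : j ≠ 0) : coeff j (exp ℚ - 1) = (j ! : ℚ)⁻¹ := by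
  simp [coeff_exp, coeff_one, hj]

theorem factorial_mul_coeff_mul_exp_sub_one (f : PowerSeries ℚ) (n : ℕ) :
    (n ! : ℚ) * coeff n (f * (exp ℚ - 1)) = ∑ i ∈ range n, n.choose i * (i ! * coeff i f) := by
  rw [coeff_mul, Nat.sum_antidiagonal_eq_sum_range_succ_mk, sum_range_succ, Nat.sub_self,
    show coeff 0 (exp ℚ - 1) = 0 by simp, mul_zero, add_zero, mul_sum]
  refine sum_congr rfl fun i hi => ?_
  have hin : i < n := mem_range.1 hi
  rw [coeff_exp_sub_one (Nat.sub_ne_zero_of_lt hin),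
    ← Nat.choose_mul_factorial_mul_factorial hin.le]
  push_cast
  field_simp

theorem factorial_mul_coeff_exp_sub_one_pow (n k : ℕ) :
    (n ! : ℚ) * coeff n ((exp ℚ - 1) ^ k) = k ! * stirling n k := by
  induction k generalizing n with
  | zero => rcases n with _ | n <;> simp [stirling_zero_right, coeff_one]
  | succ k ih =>
    have hrec : ((k + 1) * stirling n (k + 1) : ℚ) =
        ∑ j ∈ range n, (n.choose j : ℚ) * stirling j k := by
      exact_mod_cast succ_mul_stirling_succ n k
    calc (n ! : ℚ) * coeff n ((exp ℚ - 1) ^ (k + 1))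
        = ∑ j ∈ range n, (n.choose j : ℚ) * (k ! * stirling j k) := by
          rw [pow_succ, factorial_mul_coeff_mul_exp_sub_one]
          exact sum_congr rfl fun j _ => by rw [ih]
      _ = k ! * ((k + 1) * stirling n (k + 1)) := by
          rw [hrec, mul_sum]
          exact sum_congr rfl fun j _ => by ring
      _ = (k + 1)! * stirling n (k + 1) := by
          push_cast [Nat.factorial_succ]
          ring

theorem bell_zero (n : ℕ) : bell 0 n = 1 := by
  simp [bell, E, coeff_exp, Nat.factorial_ne_zero]

theorem bell_succ (m n : ℕ) :
    bell (m + 1) n = ∑ k ∈ range (n + 1), (stirling n k : ℚ) * bell m k := by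
  rw [bell, E_succ_eq_psComp, coeff_psComp, mul_sum]
  refine sum_congr rfl fun k _ => ?_
  rw [bell, mul_left_comm, factorial_mul_coeff_exp_sub_one_pow]
  ring

end PowerSeries

theorem stmt1_general (n m : ℕ) :
    (hyperBell m n : ℚ) = bell m n := by
  induction m generalizing n with
  | zero => rw [hyperBell_zero, bell_zero, Nat.cast_one]
  | succ m ih =>
    rw [hyperBell_succ, bell_succ]
    push_cast
    exact sum_congr rfl fun k _ => by rw [ih]

/-- `|℘ₙ^(m)| = Bₙ^(m)` for `n ≥ 1`, `m ≥ 1`. -/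
theorem stmt1 (n m : ℕ) (hn : 1 ≤ n) (hm : 1 ≤ m) :
    (hyperBell m n : ℚ) = bell m n :=
  stmt1_general n m
end

section
/- For every fixed n ≥ 1, there exist rational numbers c_0, c_1, …, c_{n−1}, independent of m, such that for all m ≥ 0 the m-th order Bell number satisfies B_n^(m) = c_{n−1} m^{n−1} + c_{n−2} m^{n−2} + ⋯ + c_0; that is, m ↦ B_n^(m) is a polynomial in m of degree at most n−1 with rational coefficients. -/
/-! Write `E_m - 1 = x · T_m`. The recursion `E_{m+1} = exp (E_m - 1)` gives
`[x^{n+1}] E_{m+1} - [x^{n+1}] E_m = ∑_{i ≥ 2} [x^{n+1-i}] T_m^i / i!`, which involves only the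
coefficients `[x^k] T_m = [x^{k+1}] E_m` with `k < n`. By strong induction these are polynomials
in `m` of degree at most `k`; this grading is preserved by products of power series, so the
increment is a polynomial of degree at most `n - 1`, and summing it over `m` (Faulhaber) makes
`[x^{n+1}] E_m` a polynomial of degree at most `n`. -/

open PowerSeries Finset
open scoped Nat

section PolyFn

variable (R : Type*) [CommSemiring R]

def polyFnDegLE (d : ℕ) : Submodule R (ℕ → R) where
  carrier := {f | ∃ p : Polynomial R, p.natDegree ≤ d ∧ ∀ m : ℕ, f m = p.eval (m : R)}
  add_mem' := by
    rintro f g ⟨p, hp, hf⟩ ⟨q, hq, hg⟩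
    exact ⟨p + q, (Polynomial.natDegree_add_le _ _).trans (max_le hp hq),
      fun m => by simp [hf, hg]⟩
  zero_mem' := ⟨0, by simp, by simp⟩
  smul_mem' := by
    rintro c f ⟨p, hp, hf⟩
    exact ⟨c • p, (Polynomial.natDegree_smul_le _ _).trans hp, fun m => by simp [hf]⟩

variable {R}

theorem polyFnDegLE_mono {d e : ℕ} (h : d ≤ e) : polyFnDegLE R d ≤ polyFnDegLE R e :=
  fun _ ⟨p, hp, hf⟩ => ⟨p, hp.trans h, hf⟩

theorem const_mem_polyFnDegLE (c : R) (d : ℕ) : (fun _ => c) ∈ polyFnDegLE R d :=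
  ⟨Polynomial.C c, by simp, by simp⟩

theorem mul_mem_polyFnDegLE {d e : ℕ} {f g : ℕ → R} (hf : f ∈ polyFnDegLE R d)
    (hg : g ∈ polyFnDegLE R e) : f * g ∈ polyFnDegLE R (d + e) := by
  obtain ⟨p, hp, hfp⟩ := hf
  obtain ⟨q, hq, hgq⟩ := hg
  exact ⟨p * q, Polynomial.natDegree_mul_le.trans (add_le_add hp hq),
    fun m => by simp [hfp, hgq]⟩

end PolyFn

theorem sum_range_pow_mem_polyFnDegLE (i : ℕ) :
    (fun m => ∑ j ∈ range m, (j : ℚ) ^ i) ∈ polyFnDegLE ℚ (i + 1) := by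
  refine ⟨∑ l ∈ range (i + 1), Polynomial.C (bernoulli l * (i + 1).choose l / (i + 1)) *
    Polynomial.X ^ (i + 1 - l), ?_, fun m => ?_⟩
  · exact Polynomial.natDegree_sum_le_of_forall_le _ _ fun l _ =>
      (Polynomial.natDegree_C_mul_X_pow_le _ _).trans (Nat.sub_le _ _)
  · simp [sum_range_pow, Polynomial.eval_finsetSum, div_mul_eq_mul_div]

theorem sum_range_mem_polyFnDegLE {d : ℕ} {f : ℕ → ℚ} (hf : f ∈ polyFnDegLE ℚ d) :
    (fun m => ∑ j ∈ range m, f j) ∈ polyFnDegLE ℚ (d + 1) := by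
  obtain ⟨p, hp, hfp⟩ := hf
  have hsum : (fun m => ∑ j ∈ range m, f j) =
      ∑ i ∈ range (d + 1), p.coeff i • fun m => ∑ j ∈ range m, (j : ℚ) ^ i := by
    ext m
    simp only [hfp, Polynomial.eval_eq_sum_range' (Nat.lt_succ_of_le hp), Finset.sum_apply,
      Pi.smul_apply, smul_eq_mul, Finset.mul_sum]
    exact Finset.sum_comm
  rw [hsum]
  exact Submodule.sum_mem _ fun i hi => Submodule.smul_mem _ _ <|
    polyFnDegLE_mono (by simpa using hi) (sum_range_pow_mem_polyFnDegLE i)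

theorem mem_polyFnDegLE_succ_of_sub_mem {d : ℕ} {f : ℕ → ℚ}
    (h : (fun m => f (m + 1) - f m) ∈ polyFnDegLE ℚ d) : f ∈ polyFnDegLE ℚ (d + 1) := by
  have hf : f = (fun _ => f 0) + fun m => ∑ j ∈ range m, (f (j + 1) - f j) := by
    ext m
    rw [Pi.add_apply, Finset.sum_range_sub]
    ring
  rw [hf]
  exact add_mem (const_mem_polyFnDegLE _ _) (sum_range_mem_polyFnDegLE h)

section CoeffsPolyFn

variable {R : Type*} [CommSemiring R]

def CoeffsPolyFnBelow (N : ℕ) (F : ℕ → R⟦X⟧) : Prop :=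
  ∀ k < N, (fun m => coeff k (F m)) ∈ polyFnDegLE R k

theorem coeffsPolyFnBelow_one (N : ℕ) : CoeffsPolyFnBelow N fun _ => (1 : R⟦X⟧) := by
  intro k _
  simpa only [coeff_one] using const_mem_polyFnDegLE (if k = 0 then (1 : R) else 0) k

theorem CoeffsPolyFnBelow.mul {N : ℕ} {F G : ℕ → R⟦X⟧} (hF : CoeffsPolyFnBelow N F)
    (hG : CoeffsPolyFnBelow N G) : CoeffsPolyFnBelow N (F * G) := by
  intro k hk
  have hcoeff : (fun m => coeff k ((F * G) m)) =
      ∑ ij ∈ antidiagonal k, (fun m => coeff ij.1 (F m)) * fun m => coeff ij.2 (G m) := by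
    ext m
    simp [coeff_mul, Finset.sum_apply]
  rw [hcoeff]
  refine Submodule.sum_mem _ fun ij hij => ?_
  rw [HasAntidiagonal.mem_antidiagonal] at hij
  rw [← hij]
  exact mul_mem_polyFnDegLE (hF _ (by omega)) (hG _ (by omega))

theorem CoeffsPolyFnBelow.pow {N : ℕ} {F : ℕ → R⟦X⟧} (hF : CoeffsPolyFnBelow N F) (i : ℕ) :
    CoeffsPolyFnBelow N (F ^ i) := by
  induction i with
  | zero => exact coeffsPolyFnBelow_one N
  | succ i ih => rw [pow_succ]; exact ih.mul hF

end CoeffsPolyFn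

theorem constantCoeff_E (m : ℕ) : constantCoeff (E m) = 1 := by
  rw [← coeff_zero_eq_constantCoeff_apply]
  cases m <;> simp [E, psComp, coeff_exp]

noncomputable def Etail (m : ℕ) : ℚ⟦X⟧ :=
  mk fun k => coeff (k + 1) (E m)

theorem E_sub_one_eq_X_mul_Etail (m : ℕ) : E m - 1 = X * Etail m := by
  conv_lhs => rw [eq_X_mul_shift_add_const (E m), constantCoeff_E]
  simp [Etail]

theorem coeff_E_succ (m n : ℕ) :
    coeff n (E (m + 1)) = ∑ i ∈ range (n + 1), (i ! : ℚ)⁻¹ * coeff n ((E m - 1) ^ i) := by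
  simp [E, psComp, coeff_exp]

theorem coeff_succ_E_succ (m n : ℕ) :
    coeff (n + 1) (E (m + 1)) = coeff (n + 1) (E m) +
      ∑ i ∈ range n, ((i + 2)! : ℚ)⁻¹ * coeff (n - 1 - i) (Etail m ^ (i + 2)) := by
  rw [coeff_E_succ, sum_range_succ', sum_range_succ']
  have hshift : ∀ i ∈ range n, ((i + 2)! : ℚ)⁻¹ * coeff (n + 1) ((E m - 1) ^ (i + 2)) =
      ((i + 2)! : ℚ)⁻¹ * coeff (n - 1 - i) (Etail m ^ (i + 2)) := fun i hi => by
    rw [E_sub_one_eq_X_mul_Etail, mul_pow, coeff_X_pow_mul', if_pos (by rw [mem_range] at hi; omega)]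
    congr 3
    omega
  rw [sum_congr rfl hshift, E_sub_one_eq_X_mul_Etail, zero_add, pow_one, pow_zero, coeff_one, if_neg n.succ_ne_zero, coeff_succ_X_mul, Etail,
    coeff_mk]
  norm_num
  exact add_comm _ _

theorem coeff_succ_E_mem_polyFnDegLE (n : ℕ) :
    (fun m => coeff (n + 1) (E m)) ∈ polyFnDegLE ℚ n := by
  induction n using Nat.strong_induction_on with
  | _ n ih =>
  cases n with
  | zero =>
    have hconst : ∀ m, coeff 1 (E m) = coeff 1 (E 0) := by
      intro m
      induction m with
      | zero => rfl
      | succ m ihm => simp [coeff_succ_E_succ, ihm]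
    simpa only [hconst] using const_mem_polyFnDegLE (coeff 1 (E 0)) 0
  | succ d =>
    have htail : CoeffsPolyFnBelow (d + 1) Etail := fun k hk => by simpa [Etail] using ih k hk
    have hdiff : (fun m => coeff (d + 2) (E (m + 1)) - coeff (d + 2) (E m)) =
        ∑ i ∈ range (d + 1), ((i + 2)! : ℚ)⁻¹ • fun m => coeff (d - i) ((Etail ^ (i + 2)) m) := by
      ext m
      simp [coeff_succ_E_succ]
    refine mem_polyFnDegLE_succ_of_sub_mem ?_
    rw [hdiff]
    refine Submodule.sum_mem _ fun i hi => Submodule.smul_mem _ _ ?_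
    exact polyFnDegLE_mono (Nat.sub_le d i) (htail.pow (i + 2) (d - i) (by omega))

/-- for fixed `n ≥ 1`, `m ↦ Bₙ^(m)` is a polynomial in `m` of degree at
most `n − 1` with rational coefficients independent of `m`. -/
theorem stmt15 (n : ℕ) (hn : 1 ≤ n) :
    ∃ c : ℕ → ℚ, ∀ m : ℕ, bell m n = ∑ i ∈ Finset.range n, c i * (m : ℚ) ^ i := by
  obtain ⟨d, rfl⟩ : ∃ d, n = d + 1 := ⟨n - 1, by omega⟩
  obtain ⟨p, hp, hcoeff⟩ := coeff_succ_E_mem_polyFnDegLE d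
  refine ⟨fun i => (d + 1)! * p.coeff i, fun m => ?_⟩
  rw [bell, show coeff (d + 1) (E m) = p.eval (m : ℚ) from hcoeff m,
    Polynomial.eval_eq_sum_range' (Nat.lt_succ_of_le hp), mul_sum]
  simp only [mul_assoc]
end

section
/- For every k ≥ 1 and m ≥ 1, the exponential generating function F_k^(m)(x) = Σ_{n≥k} S^(m)(n,k) · x^n/n! of the m-th order Stirling numbers satisfies the composition recurrence F_k^(m+1)(x) = F_k^(m)(exp(x) − 1) as formal power series over ℚ, where the right-hand side is the substitution of the constant-term-zero power series exp(x) − 1 into F_k^(m). -/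
/-!
Choosing the innermost partition `P₁` of an `n`-set first and then an `m`-th order partition of
its blocks gives `S^(m+1)(n,k) = ∑ᵢ S(n,i) S^(m)(i,k)`, once one knows that the number of
`m`-th order partitions of a finite set depends only on its cardinality. Since
`n! [xⁿ] (eˣ - 1)ⁱ = i! S(n,i)`, this is the coefficient form of `F_k^(m+1) = F_k^(m) ∘ (eˣ - 1)`
(for `n < k` both sides vanish, so the cut-off `k ≤ n` is harmless).

Both facts about `S(n,i)` come from one count. A map `s → Fin j` is the same as its kernel
partition together with an injective labelling of the blocks, so
`j ^ #s = ∑ᵢ (j choose i) · i! · #{partitions of s into i blocks}`; and because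
`e^{jx} = ((eˣ - 1) + 1)^j`, the numbers `n! [xⁿ] (eˣ - 1)ⁱ` satisfy the same identity with
`#s = n`. Binomial inversion then identifies all of these numbers.
-/

open Finset

theorem eq_of_forall_sum_range_choose_smul_eq {M : Type*} [AddCancelCommMonoid M] {a b : ℕ → M}
    (h : ∀ j, ∑ i ∈ range (j + 1), j.choose i • a i = ∑ i ∈ range (j + 1), j.choose i • b i) :
    a = b := by
  funext j
  induction j using Nat.strong_induction_on with
  | _ j ih =>
    have hj := h j
    rw [sum_range_succ, sum_range_succ, Nat.choose_self, one_smul, one_smul,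
      sum_congr rfl fun i hi => by rw [ih i (mem_range.1 hi)]] at hj
    exact add_left_cancel hj

namespace Finpartition

variable {α β : Type*} [DecidableEq α] {s : Finset α}

theorem parts_eq_image_part (P : Finpartition s) : P.parts = s.image P.part := by
  ext t
  refine ⟨fun ht => ?_, ?_⟩
  · obtain ⟨a, ha, rfl⟩ := P.part_surjOn ht
    exact mem_image_of_mem _ ha
  · intro h
    obtain ⟨a, ha, rfl⟩ := mem_image.1 h
    exact P.part_mem.2 ha

theorem eq_of_forall_part_eq {P Q : Finpartition s} (h : ∀ a ∈ s, P.part a = Q.part a) : P = Q :=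
  Finpartition.ext <| by rw [P.parts_eq_image_part, Q.parts_eq_image_part, image_congr h]

def labelling (P : Finpartition s) (e : P.parts ↪ β) (a : s) : β :=
  e ⟨P.part a, P.part_mem.2 a.2⟩

theorem labelling_eq_labelling_iff (P : Finpartition s) (e : P.parts ↪ β) (a b : s) :
    P.labelling e a = P.labelling e b ↔ P.part a = P.part b := by
  simp [labelling, e.injective.eq_iff]

theorem labelling_injective :
    Function.Injective fun x : Σ P : Finpartition s, P.parts ↪ β => x.1.labelling x.2 := by
  rintro ⟨P, e⟩ ⟨Q, e'⟩ h
  have hpart : ∀ a b : s, P.part a = P.part b ↔ Q.part a = Q.part b := fun a b => by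
    have h' : P.labelling e = Q.labelling e' := h
    rw [← labelling_eq_labelling_iff P e, ← labelling_eq_labelling_iff Q e', h']
  obtain rfl : P = Q := eq_of_forall_part_eq fun a ha => by
    ext b
    by_cases hb : b ∈ s
    · rw [P.mem_part_iff_part_eq_part hb ha, Q.mem_part_iff_part_eq_part hb ha]
      exact hpart ⟨b, hb⟩ ⟨a, ha⟩
    · exact iff_of_false (fun h => hb (P.part_subset a h)) (fun h => hb (Q.part_subset a h))
  congr
  ext ⟨t, ht⟩
  obtain ⟨a, ha, rfl⟩ := P.part_surjOn ht
  exact congrFun h ⟨a, ha⟩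

theorem labelling_surjective :
    Function.Surjective fun x : Σ P : Finpartition s, P.parts ↪ β => x.1.labelling x.2 := by
  classical
  intro f
  let g (a : α) : Option β := if h : a ∈ s then some (f ⟨a, h⟩) else none
  let P := ofSetSetoid (Setoid.ker g) s
  have mem_part : ∀ a b : s, (b : α) ∈ P.part a ↔ f a = f b := fun a b => by
    simp [P, mem_part_ofSetSetoid_iff_rel, Setoid.ker_def, g]
  have part_eq_iff (a b : s) : P.part a = P.part b ↔ f a = f b := by
    rw [← P.mem_part_iff_part_eq_part a.2 b.2, mem_part, eq_comm]
  choose r hr using fun t (ht : t ∈ P.parts) =>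
    let ⟨a, ha, h⟩ := P.part_surjOn ht; (⟨⟨a, ha⟩, h⟩ : ∃ a : s, P.part a = t)
  refine ⟨⟨P, ⟨fun t => f (r t.1 t.2), fun t t' h => ?_⟩⟩, funext fun a => ?_⟩
  · rw [← part_eq_iff, hr, hr] at h
    exact Subtype.ext h
  · exact (part_eq_iff _ _).1 (hr _ _)

theorem card_pow_card_eq_sum_descFactorial [Fintype β] [DecidableEq β] (s : Finset α) :
    Fintype.card β ^ #s = ∑ P : Finpartition s, (Fintype.card β).descFactorial #P.parts := by
  calc Fintype.card β ^ #s = Fintype.card (s → β) := by rw [Fintype.card_fun, Fintype.card_coe]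
    _ = Fintype.card (Σ P : Finpartition s, P.parts ↪ β) :=
      (Fintype.card_of_bijective ⟨labelling_injective, labelling_surjective⟩).symm
    _ = _ := by simp only [Fintype.card_sigma, Fintype.card_embedding_eq, Fintype.card_coe]

theorem sum_range_card_filter_card_parts_smul {M : Type*} [AddCommMonoid M] (s : Finset α)
    (g : ℕ → M) (N : ℕ) :
    ∑ i ∈ range N, #{P : Finpartition s | #P.parts = i} • g i =
      ∑ P : Finpartition s with #P.parts < N, g #P.parts := by
  simp_rw [← mem_range (n := N), ← sum_fiberwise_eq_sum_filter, ← sum_const]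
  refine sum_congr rfl fun i _ => sum_congr rfl fun P hP => ?_
  rw [(mem_filter.1 hP).2]

theorem sum_range_choose_mul_factorial_mul_card (s : Finset α) (j : ℕ) :
    ∑ i ∈ range (j + 1), j.choose i * (i.factorial * #{P : Finpartition s | #P.parts = i}) =
      j ^ #s := by
  have h := card_pow_card_eq_sum_descFactorial (β := Fin j) s
  rw [Fintype.card_fin] at h
  rw [h, ← sum_filter_of_ne (f := fun P : Finpartition s => j.descFactorial #P.parts)
      (p := fun P => #P.parts < j + 1) fun P _ hP =>
      Nat.lt_succ_of_le (not_lt.1 (mt Nat.descFactorial_eq_zero_iff_lt.2 hP)),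
    ← sum_range_card_filter_card_parts_smul]
  refine sum_congr rfl fun i _ => ?_
  rw [smul_eq_mul, Nat.descFactorial_eq_factorial_mul_choose]
  ring

end Finpartition

theorem stirling_eq_card (n i : ℕ) :
    stirling n i = #{P : Finpartition (univ : Finset (Fin n)) | #P.parts = i} := by
  rw [stirling, Nat.card_eq_fintype_card, Fintype.card_subtype]

theorem sum_range_choose_mul_factorial_mul_stirling (n j : ℕ) :
    ∑ i ∈ range (j + 1), j.choose i * (i.factorial * stirling n i) = j ^ n := by
  simpa only [← stirling_eq_card, Finset.card_fin] using
    Finpartition.sum_range_choose_mul_factorial_mul_card (univ : Finset (Fin n)) j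

namespace Finpartition

variable {α : Type*} [DecidableEq α]

theorem card_filter_card_parts_eq_stirling_s19 (s : Finset α) (i : ℕ) :
    #{P : Finpartition s | #P.parts = i} = stirling #s i := by
  have h := eq_of_forall_sum_range_choose_smul_eq
    (a := fun i => i.factorial * #{P : Finpartition s | #P.parts = i})
    (b := fun i => i.factorial * stirling #s i) fun j => by
      simp only [smul_eq_mul, sum_range_choose_mul_factorial_mul_card,
        sum_range_choose_mul_factorial_mul_stirling]
  exact Nat.eq_of_mul_eq_mul_left i.factorial_pos (congrFun h i)

theorem sum_card_parts_eq_sum_range_stirling {M : Type*} [AddCommMonoid M] (s : Finset α)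
    (g : ℕ → M) :
    ∑ P : Finpartition s, g #P.parts = ∑ i ∈ range (#s + 1), stirling #s i • g i := by
  simp_rw [← card_filter_card_parts_eq_stirling_s19, sum_range_card_filter_card_parts_smul]
  exact (sum_filter_of_ne fun P _ _ => Nat.lt_succ_of_le P.card_parts_le_card).symm

end Finpartition

namespace HyperPartition

theorem finite_s19 : ∀ (m : ℕ) {α : Type} [DecidableEq α] (s : Finset α),
    Finite (HyperPartition m s)
  | 0, _, _, _ => inferInstanceAs (Finite PUnit)
  | m + 1, _, _, s =>
    have := fun P : Finpartition s => finite_s19 m P.parts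
    inferInstanceAs (Finite (Σ P : Finpartition s, HyperPartition m P.parts))

instance {m : ℕ} {α : Type} [DecidableEq α] {s : Finset α} : Finite (HyperPartition m s) :=
  finite_s19 m s

variable {α : Type} [DecidableEq α]

theorem outerBlocks_succ {m : ℕ} {s : Finset α} (p : HyperPartition (m + 1) s) :
    outerBlocks (m + 1) p = outerBlocks m p.2 := by
  cases m <;> rfl

theorem outerBlocks_le (m : ℕ) {s : Finset α} (p : HyperPartition m s) :
    outerBlocks m p ≤ #s := by
  induction m generalizing α with
  | zero => exact le_rfl
  | succ m ih => exact (outerBlocks_succ p).trans_le ((ih p.2).trans p.1.card_parts_le_card)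

theorem card_outerBlocks_succ (m : ℕ) (s : Finset α) (k : ℕ) :
    Nat.card {p : HyperPartition (m + 1) s // outerBlocks (m + 1) p = k} =
      ∑ P : Finpartition s, Nat.card {q : HyperPartition m P.parts // outerBlocks m q = k} := by
  rw [← Nat.card_sigma]
  exact Nat.card_congr
    { toFun p := ⟨p.1.1, p.1.2, (outerBlocks_succ p.1).symm.trans p.2⟩
      invFun q := ⟨⟨q.1, q.2.1⟩, (outerBlocks_succ _).trans q.2.2⟩
      left_inv _ := rfl
      right_inv _ := rfl }

theorem card_outerBlocks_eq_hyperStirling (m : ℕ) (s : Finset α) (k : ℕ) :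
    Nat.card {p : HyperPartition m s // outerBlocks m p = k} = hyperStirling m #s k := by
  induction m generalizing α with
  | zero =>
    simp only [hyperStirling, outerBlocks, Finset.card_fin]
    rfl
  | succ m ih =>
    have key {β : Type} [DecidableEq β] (t : Finset β) :
        Nat.card {p : HyperPartition (m + 1) t // outerBlocks (m + 1) p = k} =
          ∑ i ∈ range (#t + 1), stirling #t i • hyperStirling m i k := by
      simp only [card_outerBlocks_succ, ih]
      exact Finpartition.sum_card_parts_eq_sum_range_stirling t (hyperStirling m · k)
    rw [hyperStirling, key, key, Finset.card_fin]

end HyperPartition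

theorem hyperStirling_succ (m n k : ℕ) :
    hyperStirling (m + 1) n k = ∑ i ∈ range (n + 1), stirling n i * hyperStirling m i k := by
  rw [hyperStirling, HyperPartition.card_outerBlocks_succ]
  simp only [HyperPartition.card_outerBlocks_eq_hyperStirling]
  rw [Finpartition.sum_card_parts_eq_sum_range_stirling _ (hyperStirling m · k), Finset.card_fin]
  simp only [smul_eq_mul]

theorem hyperStirling_eq_zero_of_lt {m n k : ℕ} (h : n < k) : hyperStirling m n k = 0 := by
  rw [hyperStirling, Nat.card_eq_zero]
  refine Or.inl ⟨fun p => h.not_ge ?_⟩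
  simpa [p.2] using HyperPartition.outerBlocks_le m p.1

open PowerSeries

theorem coeff_exp_sub_one_pow (n i : ℕ) :
    coeff n ((exp ℚ - 1) ^ i) = (i.factorial : ℚ) * stirling n i / n.factorial := by
  suffices h : (fun i => (n.factorial : ℚ) * coeff n ((exp ℚ - 1) ^ i)) =
      fun i => ((i.factorial * stirling n i : ℕ) : ℚ) by
    rw [eq_div_iff (by positivity), mul_comm, congrFun h i, Nat.cast_mul]
  refine eq_of_forall_sum_range_choose_smul_eq fun j => ?_
  have exp_pow : exp ℚ ^ j = ∑ i ∈ range (j + 1), j.choose i • (exp ℚ - 1) ^ i := by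
    simpa [nsmul_eq_mul, mul_comm] using add_pow (exp ℚ - 1) 1 j
  calc ∑ i ∈ range (j + 1), j.choose i • ((n.factorial : ℚ) * coeff n ((exp ℚ - 1) ^ i))
      = n.factorial * coeff n (exp ℚ ^ j) := by
        rw [exp_pow, map_sum, mul_sum]
        simp only [map_nsmul, mul_smul_comm]
    _ = ((j ^ n : ℕ) : ℚ) := by
        simp [exp_pow_eq_rescale_exp, coeff_rescale]
        field_simp
    _ = _ := by
        rw [← sum_range_choose_mul_factorial_mul_stirling n j]
        push_cast
        simp only [nsmul_eq_mul]

theorem psComp_exp_sub_one (a : ℕ → ℚ) :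
    psComp (mk fun i => a i / i.factorial) (exp ℚ - 1) =
      mk fun n => (∑ i ∈ range (n + 1), stirling n i * a i) / n.factorial := by
  ext n
  simp only [psComp, coeff_mk, map_sum, coeff_C_mul, coeff_exp_sub_one_pow, sum_div]
  refine sum_congr rfl fun i _ => ?_
  field_simp

theorem stmt19_general (k m : ℕ) :
    (PowerSeries.mk fun n =>
        if k ≤ n then (hyperStirling (m + 1) n k : ℚ) / n.factorial else 0) =
      psComp
        (PowerSeries.mk fun n =>
          if k ≤ n then (hyperStirling m n k : ℚ) / n.factorial else 0)
        (PowerSeries.exp ℚ - 1) := by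
  have egf (m : ℕ) : (mk fun n => if k ≤ n then (hyperStirling m n k : ℚ) / n.factorial else 0) =
      mk fun n => (hyperStirling m n k : ℚ) / n.factorial := by
    ext n
    simp only [coeff_mk]
    split_ifs with h
    · rfl
    · simp [hyperStirling_eq_zero_of_lt (not_le.1 h)]
  rw [egf, egf, psComp_exp_sub_one]
  simp [hyperStirling_succ]

/-- the e.g.f. `F_k^(m)(x) = Σ_{n≥k} S^(m)(n,k) xⁿ/n!` satisfies the
composition recurrence `F_k^(m+1)(x) = F_k^(m)(exp(x) − 1)` for `k ≥ 1`, `m ≥ 1`. -/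
theorem stmt19 (k m : ℕ) (hk : 1 ≤ k) (hm : 1 ≤ m) :
    (PowerSeries.mk fun n =>
        if k ≤ n then (hyperStirling (m + 1) n k : ℚ) / n.factorial else 0) =
      psComp
        (PowerSeries.mk fun n =>
          if k ≤ n then (hyperStirling m n k : ℚ) / n.factorial else 0)
        (PowerSeries.exp ℚ - 1) :=
  stmt19_general k m
end
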